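/- Let f(x) = Σ_{i=1}^n p_i · f_{μ_i,σ_i}(x) be a finite mixture of univariate Gaussian densities with positive weights, where the components are ordered so that for all i < n either σ_i < σ_n, or σ_i = σ_n and μ_i < μ_n, and the component parameters (μ_i,σ_i) are pairwise distinct. Then f(x)/f_{μ_n,σ_n}(x) tends to p_n as x → ∞. -/

import Mathlib

open Real Filter

/-- The univariate Gaussian probability density function with mean `μ` and
standard deviation `σ`. -/
noncomputable def gaussPdf (μ σ x : ℝ) : ℝ :=
  (2 * π * σ ^ 2) ^ (-(1 : ℝ) / 2) * Real.exp (-(x - μ) ^ 2 / (2 * σ ^ 2))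

lemma gaussPdf_pos (μ σ x : ℝ) (hσ : 0 < σ) : 0 < gaussPdf μ σ x := by
  have h2 : 0 < 2 * π * σ ^ 2 := by positivity
  exact mul_pos (Real.rpow_pos_of_pos h2 _) (Real.exp_pos _)

lemma quad_atBot (a b c : ℝ) (h : a < 0 ∨ (a = 0 ∧ b < 0)) :
    Tendsto (fun x : ℝ => a * x ^ 2 + b * x + c) atTop atBot := by
  apply tendsto_atBot_add_const_right
  rcases h with ha | ⟨ha, hb⟩
  · have h1 : Tendsto (fun x : ℝ => x * (a * x + b)) atTop atBot := by
      apply Tendsto.atTop_mul_atBot₀ tendsto_id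
      apply tendsto_atBot_add_const_right
      exact (tendsto_const_mul_atBot_of_neg ha).2 tendsto_id
    have : (fun x : ℝ => a * x ^ 2 + b * x) = fun x : ℝ => x * (a * x + b) := by
      funext x; ring
    rw [this]; exact h1
  · subst ha
    simp only [zero_mul, zero_add]
    exact (tendsto_const_mul_atBot_of_neg hb).2 tendsto_id

lemma ratio_tendsto_zero (μ₁ σ₁ μ₂ σ₂ : ℝ) (h1 : 0 < σ₁) (h2 : 0 < σ₂)
    (h : σ₁ < σ₂ ∨ (σ₁ = σ₂ ∧ μ₁ < μ₂)) :
    Tendsto (fun x => gaussPdf μ₁ σ₁ x / gaussPdf μ₂ σ₂ x) atTop (nhds 0) := by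
  set a : ℝ := 1 / (2 * σ₂ ^ 2) - 1 / (2 * σ₁ ^ 2) with ha_def
  set b : ℝ := μ₁ / σ₁ ^ 2 - μ₂ / σ₂ ^ 2 with hb_def
  set c : ℝ := μ₂ ^ 2 / (2 * σ₂ ^ 2) - μ₁ ^ 2 / (2 * σ₁ ^ 2) with hc_def
  set K : ℝ := (2 * π * σ₁ ^ 2) ^ (-(1 : ℝ) / 2) / (2 * π * σ₂ ^ 2) ^ (-(1 : ℝ) / 2) with hK
  have hσ1 : (σ₁ : ℝ) ^ 2 ≠ 0 := by positivity
  have hσ2 : (σ₂ : ℝ) ^ 2 ≠ 0 := by positivity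
  have key : ∀ x : ℝ, gaussPdf μ₁ σ₁ x / gaussPdf μ₂ σ₂ x
      = K * Real.exp (a * x ^ 2 + b * x + c) := by
    intro x
    unfold gaussPdf
    rw [mul_div_mul_comm, ← Real.exp_sub]
    congr 1
    rw [ha_def, hb_def, hc_def]
    field_simp
    ring
  have hE : Tendsto (fun x : ℝ => a * x ^ 2 + b * x + c) atTop atBot := by
    apply quad_atBot
    rcases h with hlt | ⟨heq, hμ⟩
    · left
      rw [ha_def, sub_neg]
      have hsq : σ₂ ^ 2 ≤ σ₂ ^ 2 := le_refl _
      apply one_div_lt_one_div_of_lt (by positivity)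
      nlinarith
    · right
      refine ⟨by rw [ha_def, heq]; ring, ?_⟩
      rw [hb_def, heq, sub_neg]
      gcongr
  have hexp : Tendsto (fun x : ℝ => K * Real.exp (a * x ^ 2 + b * x + c)) atTop (nhds 0) := by
    have := Real.tendsto_exp_atBot.comp hE
    simpa using (this.const_mul K)
  exact hexp.congr (fun x => (key x).symm)

theorem mixture_ratio_tendsto_last_weight (n : ℕ) (p μ σ : Fin (n + 1) → ℝ)
    (hσ : ∀ i, 0 < σ i) (hp : ∀ i, 0 < p i) (hsum : ∑ i, p i = 1)
    (hdist : Function.Injective (fun i => (μ i, σ i)))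
    (horder : ∀ i : Fin (n + 1), i ≠ Fin.last n →
      σ i < σ (Fin.last n) ∨ (σ i = σ (Fin.last n) ∧ μ i < μ (Fin.last n))) :
    Tendsto
      (fun x => (∑ i, p i * gaussPdf (μ i) (σ i) x) /
        gaussPdf (μ (Fin.last n)) (σ (Fin.last n)) x)
      atTop (nhds (p (Fin.last n))) := by
  have hg : ∀ x, 0 < gaussPdf (μ (Fin.last n)) (σ (Fin.last n)) x :=
    fun x => gaussPdf_pos _ _ x (hσ _)
  have hfun : ∀ x, (∑ i, p i * gaussPdf (μ i) (σ i) x) /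
      gaussPdf (μ (Fin.last n)) (σ (Fin.last n)) x
      = ∑ i, p i * (gaussPdf (μ i) (σ i) x / gaussPdf (μ (Fin.last n)) (σ (Fin.last n)) x) := by
    intro x
    rw [Finset.sum_div]
    exact Finset.sum_congr rfl (fun i _ => by rw [mul_div_assoc])
  have hlimit : (p (Fin.last n)) =
      ∑ i : Fin (n + 1), (if i = Fin.last n then p (Fin.last n) else 0) := by
    simp
  rw [hlimit]
  apply Tendsto.congr (fun x => (hfun x).symm)
  apply tendsto_finset_sum
  intro i _
  by_cases hi : i = Fin.last n
  · rw [hi]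
    simp only [if_pos rfl]
    have : (fun x => p (Fin.last n) * (gaussPdf (μ (Fin.last n)) (σ (Fin.last n)) x /
        gaussPdf (μ (Fin.last n)) (σ (Fin.last n)) x)) = fun _ => p (Fin.last n) := by
      funext x
      rw [div_self (ne_of_gt (hg x)), mul_one]
    rw [this]
    exact tendsto_const_nhds
  · simp only [if_neg hi]
    have h0 := ratio_tendsto_zero (μ i) (σ i) (μ (Fin.last n)) (σ (Fin.last n))
      (hσ i) (hσ _) (horder i hi)
    simpa using h0.const_mul (p i)
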